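/- arXiv:2205.12415 — 6 statements merged into one kernel-verified Lean document; each statement's English description precedes it below -/
import Mathlib

section
/- Let α be a composition of length k and fix n ≥ k. Let P_α be the set of n-tuples of nonnegative integers obtained as componentwise maxima of nonempty collections of n-tuples whose positive part equals α, ordered componentwise, with an adjoined bottom element 0̂. Then the poset P̂_α = P_α ∪ {0̂} is a lattice. -/
open MvPolynomial Finset
open scoped Classical

/-- The positive part of a weak composition: delete the zero entries. -/
def posList (l : List ℕ) : List ℕ := l.filter (fun x => x ≠ 0)

/-- `S_α`: length-`n` tuples of nonnegative integers whose positive part is `α`. -/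
def Sset (α : List ℕ) (n : ℕ) : Set (Fin n → ℕ) :=
  {b | posList (List.ofFn b) = α}

/-- `P_α`: componentwise maxima of nonempty collections of elements of `S_α`. -/
def Pset (α : List ℕ) (n : ℕ) : Set (Fin n → ℕ) :=
  {σ | ∃ T : Finset (Fin n → ℕ), T.Nonempty ∧ (↑T : Set (Fin n → ℕ)) ⊆ Sset α n ∧ σ = T.sup id}

/-- The local moves (M.1): `0p ↦ p0` and (M.2'): `0p ↦ pp` for `p > 0`. -/
inductive GlideMove : List ℕ → List ℕ → Prop
  | m1 (u v : List ℕ) (p : ℕ) (hp : 0 < p) :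
      GlideMove (u ++ 0 :: p :: v) (u ++ p :: 0 :: v)
  | m2 (u v : List ℕ) (p : ℕ) (hp : 0 < p) :
      GlideMove (u ++ 0 :: p :: v) (u ++ p :: p :: v)

/-- `C_α`: strings obtainable from elements of `S_α` by iterated local moves. -/
def Cset (α : List ℕ) (n : ℕ) : Set (Fin n → ℕ) :=
  {σ | ∃ b ∈ Sset α n, Relation.ReflTransGen GlideMove (List.ofFn b) (List.ofFn σ)}

/-!
`P_α` is the closure of `S_α` under componentwise maximum, so it is a join-semilattice, and it is
finite because every entry of an element of `S_α` is a part of `α`, hence at most `α.sum`.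
Adjoining `0̂` gives a finite join-semilattice with a bottom element, in which the meet of any set
is the join of its (finitely many, and at least `0̂`) lower bounds.
-/

theorem Sset_apply_le_sum {α : List ℕ} {n : ℕ} {b : Fin n → ℕ} (hb : b ∈ Sset α n) (i : Fin n) :
    b i ≤ α.sum := by
  rcases Nat.eq_zero_or_pos (b i) with h0 | hpos
  · simp [h0]
  · have hmem : b i ∈ α := hb ▸ List.mem_filter.mpr
      ⟨List.mem_ofFn.mpr ⟨i, rfl⟩, by simpa using hpos.ne'⟩
    exact List.le_sum_of_mem hmem

theorem Sset_finite (α : List ℕ) (n : ℕ) : (Sset α n).Finite :=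
  (Set.Finite.pi fun _ => Set.finite_Iic α.sum).subset
    fun _ hb i _ => Sset_apply_le_sum hb i

theorem Pset_eq_supClosure (α : List ℕ) (n : ℕ) : Pset α n = supClosure (Sset α n) := by
  ext σ
  constructor <;> rintro ⟨T, hT, hTS, rfl⟩ <;> exact ⟨T, hT, hTS, Finset.sup'_eq_sup hT id⟩

theorem Finite.exists_isGLB {β : Type*} [SemilatticeSup β] [OrderBot β] [Finite β] (s : Set β) :
    ∃ m, IsGLB s m :=
  ⟨(lowerBounds s).toFinite.toFinset.sup id, isLUB_lowerBounds.mp <| by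
    simpa using Finset.isLUB_sup_id (s := (lowerBounds s).toFinite.toFinset)⟩

theorem stmt_4_general (α : List ℕ) (n : ℕ) :
    (∀ a b : WithBot (Pset α n), ∃ s, IsLUB {a, b} s) ∧
    (∀ a b : WithBot (Pset α n), ∃ m, IsGLB {a, b} m) := by
  have hclosed : SupClosed (Pset α n) := Pset_eq_supClosure α n ▸ supClosed_supClosure
  have hfinite : (Pset α n).Finite := Pset_eq_supClosure α n ▸ (Sset_finite α n).supClosure
  let _ : SemilatticeSup (Pset α n) := Subtype.semilatticeSup fun _ _ hx hy => hclosed hx hy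
  have : Finite (Pset α n) := hfinite.to_subtype
  exact ⟨fun a b => ⟨a ⊔ b, isLUB_pair⟩, fun a b => Finite.exists_isGLB {a, b}⟩

/-- The poset `P̂_α = P_α ∪ {0̂}` (with `P_α` ordered componentwise and a bottom
element adjoined) is a lattice: every pair of elements has a join and a meet. -/
theorem stmt_4 (α : List ℕ) (hα : ∀ a ∈ α, 0 < a) (n : ℕ) (hn : α.length ≤ n) :
    (∀ a b : WithBot (Pset α n), ∃ s, IsLUB {a, b} s) ∧
    (∀ a b : WithBot (Pset α n), ∃ m, IsGLB {a, b} m) :=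
  stmt_4_general α n
end

section
/- Let α be a composition and n ≥ ℓ(α). Then C_α ⊆ P_α, i.e., every string obtainable from some element of S_α by iterated application of the moves 0p ↦ p0 and 0p ↦ pp (for p > 0) is a componentwise maximum of a collection of elements of S_α. -/
open MvPolynomial Finset
open scoped Classical

/- ### Auxiliary lemmas -/

lemma split_list (l : List ℕ) (i : ℕ) (h : i + 1 < l.length) :
    l = l.take i ++ l[i] :: l[i + 1] :: l.drop (i + 2) := by
  conv_lhs => rw [← List.take_append_drop i l]
  congr 1
  rw [List.drop_eq_getElem_cons (by omega)]
  congr 1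
  rw [List.drop_eq_getElem_cons (by omega)]

lemma posList_swap (t d : List ℕ) (x : ℕ) :
    posList (t ++ x :: 0 :: d) = posList (t ++ 0 :: x :: d) := by
  simp [posList, List.filter_append, List.filter_cons]

lemma agree_take {n : ℕ} (b c : Fin n → ℕ) (i : ℕ)
    (hag : ∀ j : Fin n, (j : ℕ) < i → b j = c j) :
    (List.ofFn b).take i = (List.ofFn c).take i := by
  apply List.ext_getElem
  · simp
  intro j h1 h2
  simp only [List.getElem_take, List.getElem_ofFn]
  have hj : j < i := by simp at h1; omega
  exact hag ⟨j, by simp at h1; omega⟩ hj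

lemma agree_drop {n : ℕ} (b c : Fin n → ℕ) (i : ℕ)
    (hag : ∀ j : Fin n, i ≤ (j : ℕ) → b j = c j) :
    (List.ofFn b).drop i = (List.ofFn c).drop i := by
  apply List.ext_getElem
  · simp
  intro j h1 h2
  simp only [List.getElem_drop, List.getElem_ofFn]
  exact hag ⟨i + j, by simp at h1; omega⟩ (by simp)

lemma ofFn_decomp {n : ℕ} (b : Fin n → ℕ) (i : ℕ) (h : i + 1 < n) :
    List.ofFn b = (List.ofFn b).take i ++
      b ⟨i, by omega⟩ :: b ⟨i + 1, h⟩ :: (List.ofFn b).drop (i + 2) := by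
  have := split_list (List.ofFn b) i (by simpa using h)
  simpa using this

lemma swap_mem_S {α : List ℕ} {n : ℕ} {b : Fin n → ℕ} (hb : b ∈ Sset α n)
    (i : ℕ) (h : i + 1 < n) (h0 : b ⟨i, by omega⟩ = 0) :
    (b ∘ Equiv.swap ⟨i, by omega⟩ ⟨i + 1, h⟩) ∈ Sset α n := by
  set c : Fin n → ℕ := b ∘ Equiv.swap (⟨i, by omega⟩ : Fin n) ⟨i + 1, h⟩ with hc
  have hci : c ⟨i, by omega⟩ = b ⟨i + 1, h⟩ := by
    simp [hc, Equiv.swap_apply_left]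
  have hci1 : c ⟨i + 1, h⟩ = b ⟨i, by omega⟩ := by
    simp [hc, Equiv.swap_apply_right]
  have hag : ∀ j : Fin n, (j : ℕ) ≠ i → (j : ℕ) ≠ i + 1 → c j = b j := by
    intro j hj1 hj2
    have e1 : j ≠ (⟨i, by omega⟩ : Fin n) := by simp [Fin.ext_iff, hj1]
    have e2 : j ≠ (⟨i + 1, h⟩ : Fin n) := by simp [Fin.ext_iff, hj2]
    simp [hc, Equiv.swap_apply_of_ne_of_ne e1 e2]
  have ht : (List.ofFn c).take i = (List.ofFn b).take i :=
    agree_take _ _ _ (fun j hj => hag j (by omega) (by omega))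
  have hd : (List.ofFn c).drop (i + 2) = (List.ofFn b).drop (i + 2) :=
    agree_drop _ _ _ (fun j hj => hag j (by omega) (by omega))
  have hdb := ofFn_decomp b i h
  have hdc := ofFn_decomp c i h
  show posList (List.ofFn c) = α
  rw [hdc, ht, hd, hci, hci1, h0, posList_swap]
  rw [h0] at hdb
  rw [← hdb]
  exact hb

lemma extract {n : ℕ} (σ τ : Fin n → ℕ) (u v : List ℕ) (a b c d : ℕ)
    (hσ : List.ofFn σ = u ++ a :: b :: v) (hτ : List.ofFn τ = u ++ c :: d :: v) :
    ∃ (i : ℕ) (h : i + 1 < n),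
      σ ⟨i, by omega⟩ = a ∧ σ ⟨i + 1, h⟩ = b ∧ τ ⟨i, by omega⟩ = c ∧ τ ⟨i + 1, h⟩ = d ∧
      ∀ j : Fin n, (j : ℕ) ≠ i → (j : ℕ) ≠ i + 1 → σ j = τ j := by
  have hlen : n = u.length + (v.length + 2) := by
    have := congrArg List.length hσ
    simpa using this
  have h : u.length + 1 < n := by omega
  refine ⟨u.length, h, ?_, ?_, ?_, ?_, ?_⟩
  · have : (List.ofFn σ)[u.length]'(by simp; omega) = a := by
      rw [List.getElem_of_eq hσ]
      rw [List.getElem_append_right (le_refl _)]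
      simp
    simpa using this
  · have : (List.ofFn σ)[u.length + 1]'(by simp; omega) = b := by
      rw [List.getElem_of_eq hσ]
      rw [List.getElem_append_right (by omega)]
      simp [Nat.add_sub_cancel_left]
    simpa using this
  · have : (List.ofFn τ)[u.length]'(by simp; omega) = c := by
      rw [List.getElem_of_eq hτ]
      rw [List.getElem_append_right (le_refl _)]
      simp
    simpa using this
  · have : (List.ofFn τ)[u.length + 1]'(by simp; omega) = d := by
      rw [List.getElem_of_eq hτ]
      rw [List.getElem_append_right (by omega)]
      simp [Nat.add_sub_cancel_left]
    simpa using this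
  · intro j hj1 hj2
    have hσj : σ j = (u ++ a :: b :: v)[(j : ℕ)]'(by simp; omega) := by
      rw [← List.getElem_of_eq hσ (by simp)]; simp
    have hτj : τ j = (u ++ c :: d :: v)[(j : ℕ)]'(by simp; omega) := by
      rw [← List.getElem_of_eq hτ (by simp)]; simp
    rw [hσj, hτj]
    rcases lt_or_ge (j : ℕ) u.length with hlt | hge
    · rw [List.getElem_append_left hlt, List.getElem_append_left hlt]
    · have hge2 : u.length + 2 ≤ (j : ℕ) := by omega
      rw [List.getElem_append_right hge, List.getElem_append_right hge]
      obtain ⟨m, hm⟩ : ∃ m, (j : ℕ) - u.length = m + 2 := ⟨(j : ℕ) - u.length - 2, by omega⟩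
      simp only [hm, List.getElem_cons_succ]

lemma glide_length {l m : List ℕ} (h : GlideMove l m) : l.length = m.length := by
  cases h <;> simp

lemma sup_coord {n : ℕ} (T : Finset (Fin n → ℕ)) (k : Fin n) :
    T.sup id k = T.sup (fun b => b k) := by
  rw [Finset.sup_apply]; rfl

lemma pset_step {α : List ℕ} {n : ℕ} {σ τ : Fin n → ℕ}
    (hmov : GlideMove (List.ofFn σ) (List.ofFn τ)) (hσ : σ ∈ Pset α n) : τ ∈ Pset α n := by
  obtain ⟨T, hTne, hTS, hsup⟩ := hσ
  have hσap : ∀ k : Fin n, σ k = T.sup (fun b => b k) := by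
    intro k; rw [hsup, sup_coord]
  generalize hL : List.ofFn σ = L at hmov
  generalize hM : List.ofFn τ = M at hmov
  cases hmov with
  | m1 u v p hp =>
    obtain ⟨i, h, hs0, hs1, ht0, ht1, hag⟩ := extract σ τ u v 0 p p 0 hL hM
    have hi : i < n := by omega
    have hb0 : ∀ b ∈ T, b ⟨i, hi⟩ = 0 := by
      intro b hb
      have h1 : b ⟨i, hi⟩ ≤ σ ⟨i, hi⟩ := by
        rw [hσap ⟨i, hi⟩]
        exact Finset.le_sup (f := fun b => b ⟨i, hi⟩) hb
      exact Nat.le_zero.mp (le_of_le_of_eq h1 hs0)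
    show ∃ T' : Finset (Fin n → ℕ), T'.Nonempty ∧ (↑T' : Set (Fin n → ℕ)) ⊆ Sset α n ∧ τ = T'.sup id
    refine ⟨T.image (fun b => b ∘ Equiv.swap (⟨i, hi⟩ : Fin n) ⟨i + 1, h⟩), ?_, ?_, ?_⟩
    · exact hTne.image _
    · intro x hx
      simp only [Finset.coe_image, Set.mem_image] at hx
      obtain ⟨b, hbT, rfl⟩ := hx
      exact swap_mem_S (hTS hbT) i h (hb0 b hbT)
    · rw [Finset.sup_image]
      funext j
      rw [Finset.sup_apply]
      show τ j = T.sup fun b => b (Equiv.swap (⟨i, hi⟩ : Fin n) ⟨i + 1, h⟩ j)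
      by_cases hji : (j : ℕ) = i
      · have hj : j = ⟨i, hi⟩ := by simp [Fin.ext_iff, hji]
        subst hj
        rw [show Equiv.swap (⟨i, hi⟩ : Fin n) ⟨i + 1, h⟩ ⟨i, hi⟩ = ⟨i + 1, h⟩ from Equiv.swap_apply_left _ _]
        rw [← hσap, hs1, ht0]
      · by_cases hji1 : (j : ℕ) = i + 1
        · have hj : j = ⟨i + 1, h⟩ := by simp [Fin.ext_iff, hji1]
          subst hj
          rw [show Equiv.swap (⟨i, hi⟩ : Fin n) ⟨i + 1, h⟩ ⟨i + 1, h⟩ = ⟨i, hi⟩ from Equiv.swap_apply_right _ _]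
          rw [← hσap, hs0, ht1]
        · have e1 : j ≠ (⟨i, hi⟩ : Fin n) := by simp [Fin.ext_iff, hji]
          have e2 : j ≠ (⟨i + 1, h⟩ : Fin n) := by simp [Fin.ext_iff, hji1]
          rw [show Equiv.swap (⟨i, hi⟩ : Fin n) ⟨i + 1, h⟩ j = j from Equiv.swap_apply_of_ne_of_ne e1 e2]
          rw [← hσap, hag j hji hji1]
  | m2 u v p hp =>
    obtain ⟨i, h, hs0, hs1, ht0, ht1, hag⟩ := extract σ τ u v 0 p p p hL hM
    have hi : i < n := by omega
    have hb0 : ∀ b ∈ T, b ⟨i, hi⟩ = 0 := by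
      intro b hb
      have h1 : b ⟨i, hi⟩ ≤ σ ⟨i, hi⟩ := by
        rw [hσap ⟨i, hi⟩]
        exact Finset.le_sup (f := fun b => b ⟨i, hi⟩) hb
      exact Nat.le_zero.mp (le_of_le_of_eq h1 hs0)
    show ∃ T' : Finset (Fin n → ℕ), T'.Nonempty ∧ (↑T' : Set (Fin n → ℕ)) ⊆ Sset α n ∧ τ = T'.sup id
    refine ⟨T ∪ T.image (fun b => b ∘ Equiv.swap (⟨i, hi⟩ : Fin n) ⟨i + 1, h⟩), ?_, ?_, ?_⟩
    · exact Finset.Nonempty.inl hTne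
    · intro x hx
      simp only [Finset.coe_union, Set.mem_union, Finset.coe_image, Set.mem_image] at hx
      rcases hx with hx | ⟨b, hbT, rfl⟩
      · exact hTS hx
      · exact swap_mem_S (hTS hbT) i h (hb0 b hbT)
    · rw [Finset.sup_union, Finset.sup_image]
      funext j
      rw [Pi.sup_apply, sup_coord, Finset.sup_apply]
      show τ j = T.sup (fun b => b j) ⊔ T.sup fun b => b (Equiv.swap (⟨i, hi⟩ : Fin n) ⟨i + 1, h⟩ j)
      by_cases hji : (j : ℕ) = i
      · have hj : j = ⟨i, hi⟩ := by simp [Fin.ext_iff, hji]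
        subst hj
        rw [show Equiv.swap (⟨i, hi⟩ : Fin n) ⟨i + 1, h⟩ ⟨i, hi⟩ = ⟨i + 1, h⟩ from Equiv.swap_apply_left _ _]
        rw [← hσap, ← hσap, hs0, hs1, ht0]
        simp
      · by_cases hji1 : (j : ℕ) = i + 1
        · have hj : j = ⟨i + 1, h⟩ := by simp [Fin.ext_iff, hji1]
          subst hj
          rw [show Equiv.swap (⟨i, hi⟩ : Fin n) ⟨i + 1, h⟩ ⟨i + 1, h⟩ = ⟨i, hi⟩ from Equiv.swap_apply_right _ _]
          rw [← hσap, ← hσap, hs0, hs1, ht1]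
          simp
        · have e1 : j ≠ (⟨i, hi⟩ : Fin n) := by simp [Fin.ext_iff, hji]
          have e2 : j ≠ (⟨i + 1, h⟩ : Fin n) := by simp [Fin.ext_iff, hji1]
          rw [show Equiv.swap (⟨i, hi⟩ : Fin n) ⟨i + 1, h⟩ j = j from Equiv.swap_apply_of_ne_of_ne e1 e2]
          rw [← hσap, hag j hji hji1]
          simp

lemma ofFn_get' {n : ℕ} (l : List ℕ) (h : l.length = n) :
    List.ofFn (fun j : Fin n => l[(j : ℕ)]'(by omega)) = l := by
  apply List.ext_getElem
  · simp [h]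
  intro j h1 h2
  simp

/-- `C_α ⊆ P_α`: every string obtainable from an element of `S_α` by iterated
application of the moves `0p ↦ p0` and `0p ↦ pp` (`p > 0`) is a componentwise
maximum of a nonempty collection of elements of `S_α`. -/
theorem stmt_6 (α : List ℕ) (hα : ∀ a ∈ α, 0 < a) (n : ℕ) (hn : α.length ≤ n) :
    Cset α n ⊆ Pset α n := by
  intro σ hσ
  obtain ⟨b, hbS, hrel⟩ := hσ
  have hbase : ∀ c : Fin n → ℕ, c ∈ Sset α n → c ∈ Pset α n := by
    intro c hc
    exact ⟨{c}, Finset.singleton_nonempty c, by simpa using hc, by simp⟩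
  suffices h : ∀ l, Relation.ReflTransGen GlideMove (List.ofFn b) l →
      ∃ hl : l.length = n, (fun j : Fin n => l[(j : ℕ)]'(by omega)) ∈ Pset α n by
    obtain ⟨hl, hmem⟩ := h _ hrel
    have heq : (fun j : Fin n => (List.ofFn σ)[(j : ℕ)]'(by omega)) = σ := by
      funext j; simp
    rwa [heq] at hmem
  intro l hl
  induction hl with
  | refl =>
    refine ⟨by simp, ?_⟩
    have heq : (fun j : Fin n => (List.ofFn b)[(j : ℕ)]'(by simp)) = b := by
      funext j; simp
    rw [heq]
    exact hbase b hbS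
  | @tail m l' hlm hmove ih =>
    obtain ⟨hlen, hmem⟩ := ih
    have hlen' : l'.length = n := by rw [← glide_length hmove, hlen]
    refine ⟨hlen', ?_⟩
    apply pset_step (σ := fun j : Fin n => m[(j : ℕ)]'(by omega)) ?_ hmem
    rw [ofFn_get' m hlen, ofFn_get' l' hlen']
    exact hmove
end

section
/- Let α be a composition and n ≥ ℓ(α). If σ ∈ P_α \ C_α, then μ_{P_α}(σ) = 0, where μ_{P_α} is the Möbius-type function on P_α defined by ∑_{q ≤ σ} μ_{P_α}(q) = 1 for all σ ∈ P_α. -/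
open MvPolynomial Finset
open scoped Classical

/-!
Write `q⁺` for the positive part of `q` and `D(γ, w)` for the number of ways to split `w` into
nonempty runs `a₁ ^ k₁ ⋯ aₘ ^ kₘ` along `γ = [a₁, …, aₘ]`. The Möbius function of `P_α` is
`μ(q) = (-1) ^ (ℓ(α) + ℓ(q⁺)) * D(α, q⁺)`.

Every `q` with `D(α, q⁺) ≠ 0` arises from the empty tuple by prepending letters, and by
prepending to a tuple its first positive letter `x` (in `C_α` through the moves
`0 0ʲ x ↦ x 0ʲ x`, in `P_α` as a join). Both `P_α` and `C_α` are closed under these operations,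
so such `q` lie in `P_α ∩ C_α`. Hence for `p ∈ P_α` the sum of `μ` over `P_α ∩ [0, p]` is its
sum over the box `[0, p]`, and expanding the box one coordinate at a time shows that this sum is
`1` exactly when `p` lies above an element of `S_α`. So `μ` is `μ_{P_α}`, and it vanishes off
`C_α`.
-/

section

variable {γ : List ℕ} {n : ℕ}

@[simp] lemma posList_nil : posList [] = [] := rfl

@[simp] lemma posList_cons_zero (l : List ℕ) : posList (0 :: l) = posList l := by simp [posList]

lemma posList_cons_of_ne_zero {x : ℕ} (hx : x ≠ 0) (l : List ℕ) :
    posList (x :: l) = x :: posList l := by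
  simp [posList, hx]

lemma posList_cons (c : ℕ) (l : List ℕ) : posList (c :: l) = posList [c] ++ posList l :=
  List.filter_append [c] l

lemma mem_Sset {s : Fin n → ℕ} : s ∈ Sset γ n ↔ posList (List.ofFn s) = γ :=
  Iff.rfl

lemma cons_mem_Sset {s : Fin n → ℕ} (c : ℕ) (hs : s ∈ Sset γ n) :
    Fin.cons c s ∈ Sset (posList [c] ++ γ) (n + 1) := by
  rw [mem_Sset, List.ofFn_cons, posList_cons, mem_Sset.1 hs]

lemma exists_le_of_mem_Sset_cons {x : ℕ} {s : Fin n → ℕ} (hs : s ∈ Sset (x :: γ) n) :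
    ∃ t ∈ Sset γ n, t ≤ s := by
  induction n with
  | zero => simp [mem_Sset] at hs
  | succ n ih =>
    induction s using Fin.consCases with
    | cons y s =>
    rw [mem_Sset, List.ofFn_cons] at hs
    by_cases hy : y = 0
    · subst hy
      obtain ⟨t, ht, hts⟩ := ih (mem_Sset.2 (by simpa using hs))
      exact ⟨Fin.cons 0 t, by simpa using cons_mem_Sset 0 ht, Fin.cons_le_cons.2 ⟨le_rfl, hts⟩⟩
    · rw [posList_cons_of_ne_zero hy, List.cons.injEq] at hs
      exact ⟨Fin.cons 0 s, by simpa using cons_mem_Sset 0 hs.2,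
        Fin.cons_le_cons.2 ⟨Nat.zero_le y, le_rfl⟩⟩

lemma mem_upperClosure_Sset_nil (p : Fin n → ℕ) : p ∈ upperClosure (Sset [] n) :=
  mem_upperClosure.2 ⟨0, by simp [mem_Sset, posList], fun i => Nat.zero_le _⟩

lemma cons_mem_upperClosure_Sset_cons {a : ℕ} (ha : a ≠ 0) (x : ℕ) (p : Fin n → ℕ) :
    Fin.cons x p ∈ upperClosure (Sset (a :: γ) (n + 1)) ↔
      if a ≤ x then p ∈ upperClosure (Sset γ n) else p ∈ upperClosure (Sset (a :: γ) n) := by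
  simp only [mem_upperClosure]
  constructor
  · rintro ⟨t, ht, htp⟩
    induction t using Fin.consCases with
    | cons y t =>
    rw [Fin.cons_le_cons] at htp
    rw [mem_Sset, List.ofFn_cons] at ht
    by_cases hy : y = 0
    · subst hy
      have ht : t ∈ Sset (a :: γ) n := mem_Sset.2 (by simpa using ht)
      split_ifs
      · obtain ⟨s, hs, hst⟩ := exists_le_of_mem_Sset_cons ht
        exact ⟨s, hs, hst.trans htp.2⟩
      · exact ⟨t, ht, htp.2⟩
    · rw [posList_cons_of_ne_zero hy, List.cons.injEq] at ht
      rw [if_pos (ht.1 ▸ htp.1)]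
      exact ⟨t, ht.2, htp.2⟩
  · split_ifs with hax
    · rintro ⟨t, ht, htp⟩
      exact ⟨Fin.cons a t, by simpa [posList, ha] using cons_mem_Sset a ht,
        Fin.cons_le_cons.2 ⟨hax, htp⟩⟩
    · rintro ⟨t, ht, htp⟩
      exact ⟨Fin.cons 0 t, by simpa using cons_mem_Sset 0 ht,
        Fin.cons_le_cons.2 ⟨Nat.zero_le x, htp⟩⟩

lemma Sset_subset_Pset : Sset γ n ⊆ Pset γ n :=
  fun s hs => ⟨{s}, singleton_nonempty s, by simpa using hs, by simp⟩

lemma sup_mem_Pset {p q : Fin n → ℕ} (hp : p ∈ Pset γ n) (hq : q ∈ Pset γ n) :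
    p ⊔ q ∈ Pset γ n := by
  obtain ⟨T, hT, hTS, rfl⟩ := hp
  obtain ⟨U, -, hUS, rfl⟩ := hq
  exact ⟨T ∪ U, hT.mono subset_union_left, by simpa using And.intro hTS hUS, (sup_union).symm⟩

lemma cons_mem_Pset {r : Fin n → ℕ} (c : ℕ) (hr : r ∈ Pset γ n) :
    Fin.cons c r ∈ Pset (posList [c] ++ γ) (n + 1) := by
  obtain ⟨T, hT, hTS, rfl⟩ := hr
  refine ⟨T.image (Fin.cons c), hT.image _, ?_, ?_⟩
  · simpa [Set.subset_def] using fun s hs => cons_mem_Sset c (hTS hs)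
  · ext i
    refine Fin.cases ?_ (fun j => ?_) i <;>
      simp [Finset.sup_apply, sup_image, Function.comp_def, sup_const hT]

lemma mem_upperClosure_of_mem_Pset {p : Fin n → ℕ} (hp : p ∈ Pset γ n) :
    p ∈ upperClosure (Sset γ n) := by
  obtain ⟨T, ⟨t, ht⟩, hTS, rfl⟩ := hp
  exact mem_upperClosure.2 ⟨t, hTS ht, le_sup (f := id) ht⟩

lemma cons_mem_Pset_cons {x : ℕ} (hx : x ≠ 0) {r : Fin n → ℕ} (hr : r ∈ Pset (x :: γ) n) :
    Fin.cons x r ∈ Pset (x :: γ) (n + 1) := by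
  obtain ⟨t, ht, htr⟩ : ∃ t ∈ Sset γ n, t ≤ r := by
    obtain ⟨s, hs, hsr⟩ := mem_upperClosure.1 (mem_upperClosure_of_mem_Pset hr)
    obtain ⟨t, ht, hts⟩ := exists_le_of_mem_Sset_cons hs
    exact ⟨t, ht, hts.trans hsr⟩
  have h0r : Fin.cons 0 r ∈ Pset (x :: γ) (n + 1) := by simpa using cons_mem_Pset 0 hr
  have hxt : Fin.cons x t ∈ Pset (x :: γ) (n + 1) := by
    simpa [posList, hx] using cons_mem_Pset x (Sset_subset_Pset ht)
  have hsup : (Fin.cons 0 r ⊔ Fin.cons x t : Fin (n + 1) → ℕ) = Fin.cons x r := by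
    ext i
    exact Fin.cases (by simp) (fun j => by simp [htr j]) i
  exact hsup ▸ sup_mem_Pset h0r hxt

lemma GlideMove.cons {l l' : List ℕ} (c : ℕ) (h : GlideMove l l') :
    GlideMove (c :: l) (c :: l') := by
  cases h with
  | m1 u v p hp => exact .m1 (c :: u) v p hp
  | m2 u v p hp => exact .m2 (c :: u) v p hp

lemma GlideMove.reflTransGen_cons {l l' : List ℕ} (c : ℕ)
    (h : Relation.ReflTransGen GlideMove l l') :
    Relation.ReflTransGen GlideMove (c :: l) (c :: l') :=
  h.lift (c :: ·) fun _ _ => GlideMove.cons c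

lemma GlideMove.reflTransGen_zero_cons {x : ℕ} (hx : x ≠ 0) :
    ∀ {l w : List ℕ}, posList l = x :: w → Relation.ReflTransGen GlideMove (0 :: l) (x :: l)
  | [], _, h => by simp at h
  | y :: l, w, h => by
    by_cases hy : y = 0
    · subst hy
      exact (reflTransGen_cons 0 (reflTransGen_zero_cons hx (by simpa using h))).tail
        (.m1 [] l x (Nat.pos_of_ne_zero hx))
    · obtain ⟨rfl, -⟩ := List.cons.inj ((posList_cons_of_ne_zero hy l).symm.trans h)
      exact .single (.m2 [] l y (Nat.pos_of_ne_zero hy))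

lemma cons_mem_Cset {r : Fin n → ℕ} (c : ℕ) (hr : r ∈ Cset γ n) :
    Fin.cons c r ∈ Cset (posList [c] ++ γ) (n + 1) := by
  obtain ⟨b, hb, hbr⟩ := hr
  exact ⟨Fin.cons c b, cons_mem_Sset c hb, by simpa using GlideMove.reflTransGen_cons c hbr⟩

lemma cons_mem_Cset_cons {x : ℕ} (hx : x ≠ 0) {w : List ℕ} {r : Fin n → ℕ}
    (hr : r ∈ Cset (x :: γ) n) (hrx : posList (List.ofFn r) = x :: w) :
    Fin.cons x r ∈ Cset (x :: γ) (n + 1) := by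
  obtain ⟨b, hb, hbr⟩ := cons_mem_Cset 0 hr
  rw [List.ofFn_cons] at hbr
  refine ⟨b, by simpa using hb, ?_⟩
  simpa using hbr.trans (GlideMove.reflTransGen_zero_cons hx hrx)

/-- The number of ways to write `w` as `a₁ ^ k₁ ⋯ aₘ ^ kₘ` (runs of equal letters) with all
`kᵢ ≥ 1`, where `γ = [a₁, …, aₘ]`. -/
def runCount : List ℕ → List ℕ → ℕ
  | [], [] => 1
  | [], _ :: _ => 0
  | _ :: _, [] => 0
  | a :: γ, x :: w => if x = a then runCount γ w + runCount (a :: γ) w else 0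

@[simp] lemma runCount_nil_cons (x : ℕ) (w : List ℕ) : runCount [] (x :: w) = 0 := rfl

@[simp] lemma runCount_cons_nil (a : ℕ) (γ : List ℕ) : runCount (a :: γ) [] = 0 := rfl

lemma runCount_cons_cons (a : ℕ) (γ : List ℕ) (x : ℕ) (w : List ℕ) :
    runCount (a :: γ) (x :: w) = if x = a then runCount γ w + runCount (a :: γ) w else 0 := rfl

lemma runCount_cons_ne_zero {a : ℕ} {w : List ℕ} (h : runCount (a :: γ) w ≠ 0) :
    ∃ w', w = a :: w' ∧ (runCount γ w' ≠ 0 ∨ runCount (a :: γ) w' ≠ 0) := by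
  obtain _ | ⟨x, w'⟩ := w
  · simp at h
  · rw [runCount_cons_cons] at h
    split_ifs at h with hxa
    · exact ⟨w', by rw [hxa], by omega⟩
    · exact absurd rfl h

theorem runCount_ne_zero_induction {X : List ℕ → (n : ℕ) → (Fin n → ℕ) → Prop}
    (nil : ∀ q, X [] 0 q)
    (cons : ∀ γ n r c, X γ n r → X (posList [c] ++ γ) (n + 1) (Fin.cons c r))
    (cons_dup : ∀ γ w n r x, x ≠ 0 → X (x :: γ) n r → posList (List.ofFn r) = x :: w →
      X (x :: γ) (n + 1) (Fin.cons x r)) :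
    ∀ {γ : List ℕ} {n : ℕ} {q : Fin n → ℕ}, runCount γ (posList (List.ofFn q)) ≠ 0 → X γ n q
  | [], 0, q, _ => nil q
  | _ :: _, 0, _, h => by simp at h
  | γ, n + 1, q, h => by
    induction q using Fin.consCases with
    | cons x r =>
    rw [List.ofFn_cons] at h
    by_cases hx : x = 0
    · subst hx
      simpa using cons γ n r 0 (runCount_ne_zero_induction nil cons cons_dup (by simpa using h))
    rw [posList_cons_of_ne_zero hx] at h
    obtain _ | ⟨a, γ⟩ := γ
    · simp at h
    obtain ⟨w', hw', hlast | hdup⟩ := runCount_cons_ne_zero h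
    all_goals obtain ⟨rfl, rfl⟩ := List.cons.inj hw'
    · simpa [posList, hx] using
        cons γ n r x (runCount_ne_zero_induction nil cons cons_dup hlast)
    · obtain ⟨w, hw, -⟩ := runCount_cons_ne_zero hdup
      exact cons_dup γ w n r x hx (runCount_ne_zero_induction nil cons cons_dup hdup) hw

lemma mem_Pset_of_runCount_ne_zero {q : Fin n → ℕ} (h : runCount γ (posList (List.ofFn q)) ≠ 0) :
    q ∈ Pset γ n :=
  runCount_ne_zero_induction (X := fun γ n q => q ∈ Pset γ n)
    (fun _ => Sset_subset_Pset (by simp [mem_Sset]))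
    (fun _ _ _ c hr => cons_mem_Pset c hr)
    (fun _ _ _ _ _ hx hr _ => cons_mem_Pset_cons hx hr) h

lemma mem_Cset_of_runCount_ne_zero {q : Fin n → ℕ} (h : runCount γ (posList (List.ofFn q)) ≠ 0) :
    q ∈ Cset γ n :=
  runCount_ne_zero_induction (X := fun γ n q => q ∈ Cset γ n)
    (fun _ => ⟨_, by simp [mem_Sset], .refl⟩)
    (fun _ _ _ c hr => cons_mem_Cset c hr)
    (fun _ _ _ _ _ hx hr hrx => cons_mem_Cset_cons hx hr hrx) h

lemma sum_Iic_cons {α M : Type*} [PartialOrder α] [LocallyFiniteOrderBot α] [DecidableEq α]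
    [AddCommMonoid M] (x : α) (p : Fin n → α) (f : (Fin (n + 1) → α) → M) :
    ∑ q ∈ Iic (Fin.cons x p : Fin (n + 1) → α), f q =
      ∑ y ∈ Iic x, ∑ r ∈ Iic p, f (Fin.cons y r) := by
  rw [← sum_product']
  refine sum_nbij' (fun q => (q 0, Fin.tail q)) (fun yr => Fin.cons yr.1 yr.2) ?_ ?_ ?_ ?_ ?_
  · intro q hq
    rw [mem_Iic, ← Fin.cons_self_tail q, Fin.cons_le_cons] at hq
    simpa using hq
  · rintro ⟨y, r⟩ hyr
    simpa [Fin.cons_le_cons] using hyr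
  · intro q _
    exact Fin.cons_self_tail q
  · rintro ⟨y, r⟩ _
    simp
  · intro q _
    rw [Fin.cons_self_tail]

lemma sum_Iic_eq_add_ite {M : Type*} [AddCommMonoid M] {f : ℕ → M} {a : ℕ} (ha : a ≠ 0)
    (hf : ∀ y, y ≠ 0 → y ≠ a → f y = 0) (x : ℕ) :
    ∑ y ∈ Iic x, f y = f 0 + if a ≤ x then f a else 0 := by
  split_ifs with hax
  · exact sum_eq_add_of_mem 0 a (by simp) (by simpa using hax) ha.symm
      fun y _ hy => hf y hy.1 hy.2
  · rw [add_zero]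
    refine sum_eq_single_of_mem 0 (by simp) fun y hy hy0 => hf y hy0 ?_
    rintro rfl
    exact hax (mem_Iic.1 hy)

def signedRunCount (γ w : List ℕ) : ℤ := (-1) ^ w.length * runCount γ w

@[simp] lemma signedRunCount_cons_nil (a : ℕ) (γ : List ℕ) : signedRunCount (a :: γ) [] = 0 := by
  simp [signedRunCount]

@[simp] lemma signedRunCount_nil_cons (x : ℕ) (w : List ℕ) : signedRunCount [] (x :: w) = 0 := by
  simp [signedRunCount]

lemma signedRunCount_cons_cons (a : ℕ) (γ : List ℕ) (x : ℕ) (w : List ℕ) :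
    signedRunCount (a :: γ) (x :: w) =
      if x = a then -(signedRunCount γ w + signedRunCount (a :: γ) w) else 0 := by
  simp only [signedRunCount, runCount_cons_cons, List.length_cons, pow_succ]
  split_ifs <;> push_cast <;> ring

theorem sum_Iic_signedRunCount :
    ∀ {γ : List ℕ}, (∀ a ∈ γ, 0 < a) → ∀ p : Fin n → ℕ,
      ∑ q ∈ Iic p, signedRunCount γ (posList (List.ofFn q)) =
        if p ∈ upperClosure (Sset γ n) then (-1) ^ γ.length else 0 := by
  induction n with
  | zero =>
    intro γ _ p
    rw [sum_eq_single_of_mem p (mem_Iic.2 le_rfl) fun q _ hq => absurd (Subsingleton.elim q p) hq]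
    obtain _ | ⟨a, γ⟩ := γ
    · rw [if_pos (mem_upperClosure_Sset_nil p)]
      rfl
    · simp [mem_upperClosure, mem_Sset]
  | succ n ih =>
    intro γ hγ p
    induction p using Fin.consCases with
    | cons x p =>
    rw [sum_Iic_cons]
    simp only [List.ofFn_cons]
    obtain _ | ⟨a, γ⟩ := γ
    · rw [sum_eq_single_of_mem 0 (by simp) fun y _ hy => by simp [posList_cons_of_ne_zero hy]]
      simp only [posList_cons_zero]
      rw [ih hγ, if_pos (mem_upperClosure_Sset_nil _), if_pos (mem_upperClosure_Sset_nil _)]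
    have ha : a ≠ 0 := (hγ a (by simp)).ne'
    have hγ' : ∀ b ∈ γ, 0 < b := fun b hb => hγ b (by simp [hb])
    rw [sum_Iic_eq_add_ite ha (fun y hy hya => by
      simp [posList_cons_of_ne_zero hy, signedRunCount_cons_cons, hya]) x]
    simp only [posList_cons_zero, posList_cons_of_ne_zero ha, signedRunCount_cons_cons, if_pos,
      sum_neg_distrib, sum_add_distrib, ih hγ, ih hγ', cons_mem_upperClosure_Sset_cons ha,
      List.length_cons, pow_succ]
    split_ifs <;> ring

lemma eq_of_sum_filter_le_eq {α M : Type*} [PartialOrder α] [AddCancelCommMonoid M]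
    (F : Finset α) {μ ν : α → M}
    (h : ∀ p ∈ F, ∑ q ∈ F.filter (fun q => q ≤ p), μ q = ∑ q ∈ F.filter (fun q => q ≤ p), ν q)
    {p : α} (hp : p ∈ F) : μ p = ν p := by
  refine (F.finite_toSet.wellFoundedOn (r := (· < ·))).induction hp
    (P := fun p => μ p = ν p) fun p hp ih => ?_
  have hpp : p ∈ F.filter (fun q => q ≤ p) := mem_filter.2 ⟨hp, le_rfl⟩
  have hlower : ∑ q ∈ (F.filter (fun q => q ≤ p)).erase p, μ q =
      ∑ q ∈ (F.filter (fun q => q ≤ p)).erase p, ν q := by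
    refine sum_congr rfl fun q hq => ?_
    obtain ⟨hqp, hq⟩ := mem_erase.1 hq
    exact ih q (mem_filter.1 hq).1 (lt_of_le_of_ne (mem_filter.1 hq).2 hqp)
  have := h p hp
  rwa [← sum_erase_add _ _ hpp, ← sum_erase_add _ _ hpp, hlower, add_right_inj] at this

def runMobius (α : List ℕ) (q : Fin n → ℕ) : ℤ :=
  (-1) ^ α.length * signedRunCount α (posList (List.ofFn q))

lemma runMobius_eq_zero {q : Fin n → ℕ} (h : runCount γ (posList (List.ofFn q)) = 0) :
    runMobius γ q = 0 := by
  simp [runMobius, signedRunCount, h]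

lemma sum_filter_le_runMobius (hγ : ∀ a ∈ γ, 0 < a) {F : Finset (Fin n → ℕ)}
    (hF : (↑F : Set (Fin n → ℕ)) = Pset γ n) {p : Fin n → ℕ} (hp : p ∈ Pset γ n) :
    ∑ q ∈ F.filter (fun q => q ≤ p), runMobius γ q = 1 := by
  have hsub : F.filter (fun q => q ≤ p) ⊆ Iic p := fun q hq => mem_Iic.2 (mem_filter.1 hq).2
  have hvanish : ∀ q ∈ Iic p, q ∉ F.filter (fun q => q ≤ p) → runMobius γ q = 0 := by
    intro q hqp hq
    refine runMobius_eq_zero (not_not.1 fun hne => hq (mem_filter.2 ⟨?_, mem_Iic.1 hqp⟩))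
    rw [← mem_coe, hF]
    exact mem_Pset_of_runCount_ne_zero hne
  rw [sum_subset hsub hvanish]
  simp only [runMobius]
  rw [← mul_sum, sum_Iic_signedRunCount hγ, if_pos (mem_upperClosure_of_mem_Pset hp), ← pow_add,
    Even.neg_one_pow ⟨_, rfl⟩]

end

theorem stmt_8_general (α : List ℕ) (hα : ∀ a ∈ α, 0 < a) (n : ℕ)
    (F : Finset (Fin n → ℕ)) (hF : (↑F : Set (Fin n → ℕ)) = Pset α n)
    (μ : (Fin n → ℕ) → ℤ)
    (hμ : ∀ p ∈ F, ∑ q ∈ F.filter (fun q => q ≤ p), μ q = 1)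
    (σ : Fin n → ℕ) (hσP : σ ∈ Pset α n) (hσC : σ ∉ Cset α n) :
    μ σ = 0 := by
  have hσF : σ ∈ F := by rwa [← mem_coe, hF]
  have hμσ : μ σ = runMobius α σ := eq_of_sum_filter_le_eq F
    (fun p hp => (hμ p hp).trans (sum_filter_le_runMobius hα hF (hF ▸ hp)).symm) hσF
  rw [hμσ]
  exact runMobius_eq_zero (not_not.1 fun hne => hσC (mem_Cset_of_runCount_ne_zero hne))

/-- If `σ ∈ P_α \ C_α`, then `μ_{P_α}(σ) = 0`, where `μ_{P_α}` is the Möbius-type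
function on `P_α` determined by `∑_{q ≤ p} μ_{P_α}(q) = 1` for all `p ∈ P_α`. -/
theorem stmt_8 (α : List ℕ) (hα : ∀ a ∈ α, 0 < a) (n : ℕ) (hn : α.length ≤ n)
    (F : Finset (Fin n → ℕ)) (hF : (↑F : Set (Fin n → ℕ)) = Pset α n)
    (μ : (Fin n → ℕ) → ℤ)
    (hμ : ∀ p ∈ F, ∑ q ∈ F.filter (fun q => q ≤ p), μ q = 1)
    (σ : Fin n → ℕ) (hσP : σ ∈ Pset α n) (hσC : σ ∉ Cset α n) :
    μ σ = 0 :=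
  stmt_8_general α hα n F hF μ hμ σ hσP hσC
end

section
/- For any composition α and n ≥ ℓ(α), the polynomial Ṁ_α(y_1,...,y_n) := ∑_{σ ∈ P_α} μ_{P_α}(σ) y^σ is quasisymmetric in y_1,...,y_n. -/
open MvPolynomial Finset
open scoped Classical

/-- The exponent vector placing `β_t` in position `j_t`. -/
noncomputable def expVec {n k : ℕ} (j : Fin k → Fin n) (β : Fin k → ℕ) : Fin n →₀ ℕ :=
  Finsupp.equivFunOnFinite.symm (fun i => ∑ t : Fin k, if j t = i then β t else 0)

/-- A polynomial is quasisymmetric if, for every composition `β` and any two strictly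
increasing index sequences, the corresponding monomials have equal coefficients. -/
def IsQuasisymmetric {n : ℕ} {R : Type*} [CommSemiring R] (f : MvPolynomial (Fin n) R) : Prop :=
  ∀ (k : ℕ) (β : Fin k → ℕ), (∀ t, 0 < β t) →
    ∀ j j' : Fin k → Fin n, StrictMono j → StrictMono j' →
      f.coeff (expVec j β) = f.coeff (expVec j' β)

/-!
The coefficient of `y^e` in `M̄_α` is `μ e` if `e ∈ P_α` and `0` otherwise. The monomials
`y_{j_1}^{β_1} ⋯ y_{j_k}^{β_k}` have exponent vector `extend j β 0`, and extension by zero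
along a strictly increasing `g : Fin k → Fin n` preserves positive parts and componentwise
maxima. Hence `extend g w 0 ∈ P_α(n) ↔ w ∈ P_α(k)`, and `extend g · 0` maps the down-set of `w`
bijectively onto that of `extend g w 0` in `P_α(n)`. So for every such `g`, `μ ∘ extend g · 0`
solves on `P_α(k)` the triangular system `∑_{v ≤ w} ν v = 1`, whose solution is unique.
-/

open Function

theorem eq_of_sum_Iic_filter_eq {β M : Type*} [PartialOrder β] [LocallyFiniteOrderBot β]
    [WellFoundedLT β] [AddCancelCommMonoid M] {P : β → Prop} [DecidablePred P] {ν₁ ν₂ : β → M}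
    (h : ∀ w, P w → ∑ v ∈ Iic w with P v, ν₁ v = ∑ v ∈ Iic w with P v, ν₂ v) :
    ∀ w, P w → ν₁ w = ν₂ w := by
  intro w
  induction w using WellFoundedLT.induction with
  | _ w ih =>
    intro hw
    have hlower : ∑ v ∈ Iio w with P v, ν₁ v = ∑ v ∈ Iio w with P v, ν₂ v :=
      sum_congr rfl fun v hv => by
        rw [mem_filter, mem_Iio] at hv
        exact ih v hv.1 hv.2
    have hw' := h w hw
    rw [Iic_eq_cons_Iio, filter_cons_of_pos _ _ _ _ hw, sum_cons, sum_cons, hlower] at hw'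
    exact add_right_cancel hw'

section Extend

variable {ι κ : Type*} {g : ι → κ}

theorem apply_eq_zero_of_le_extend (b : κ → ℕ) (w : ι → ℕ) (hb : b ≤ extend g w 0) {i : κ}
    (hi : i ∉ Set.range g) : b i = 0 :=
  Nat.eq_zero_of_le_zero ((hb i).trans_eq (extend_apply' _ _ _ hi))

theorem extend_comp_eq_self (hg : Injective g) {b : κ → ℕ}
    (hb : ∀ i, i ∉ Set.range g → b i = 0) : extend g (b ∘ g) 0 = b := by
  funext i
  by_cases hi : i ∈ Set.range g
  · obtain ⟨s, rfl⟩ := hi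
    exact hg.extend_apply _ _ s
  · rw [extend_apply' _ _ _ hi, hb i hi, Pi.zero_apply]

theorem extend_le_extend (hg : Injective g) {v w : ι → ℕ} (h : v ≤ w) :
    extend g v 0 ≤ extend g w 0 := by
  intro i
  by_cases hi : i ∈ Set.range g
  · obtain ⟨s, rfl⟩ := hi
    simpa only [hg.extend_apply] using h s
  · simp only [extend_apply' _ _ _ hi, le_refl]

theorem extend_finset_sup (hg : Injective g) (T : Finset (ι → ℕ)) :
    extend g (T.sup id) 0 = T.sup fun v => extend g v 0 := by
  funext i
  rw [Finset.sup_apply]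
  by_cases hi : i ∈ Set.range g
  · obtain ⟨s, rfl⟩ := hi
    simp only [hg.extend_apply, Finset.sup_apply, id]
  · simp only [extend_apply' _ _ _ hi, Pi.zero_apply]
    exact (sup_bot (α := ℕ) T).symm

theorem sum_filter_le_extend {M : Type*} [Fintype ι] [DecidableEq ι] [AddCommMonoid M]
    (hg : Injective g) (F : Finset (κ → ℕ)) (f : (κ → ℕ) → M) (w : ι → ℕ) :
    ∑ q ∈ F with q ≤ extend g w 0, f q =
      ∑ v ∈ (Iic w).filter (fun v : ι → ℕ => extend g v 0 ∈ F), f (extend g v 0) := by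
  symm
  refine sum_nbij' (fun v : ι → ℕ => extend g v 0) (· ∘ g) ?_ ?_ ?_ ?_ fun _ _ => rfl
  · intro v hv
    simp only [mem_filter, mem_Iic] at hv ⊢
    exact ⟨hv.2, extend_le_extend hg hv.1⟩
  · intro q hq
    simp only [mem_filter, mem_Iic] at hq ⊢
    rw [extend_comp_eq_self hg fun i => apply_eq_zero_of_le_extend q w hq.2]
    refine ⟨fun s => ?_, hq.1⟩
    exact (hq.2 (g s)).trans_eq (hg.extend_apply w 0 s)
  · intro v _
    exact extend_comp hg v 0
  · intro q hq
    simp only [mem_filter] at hq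
    exact extend_comp_eq_self hg fun i => apply_eq_zero_of_le_extend q w hq.2

end Extend

section PositivePart

variable {m n : ℕ} {g : Fin m → Fin n}

theorem posList_ofFn_comp (hg : StrictMono g) {b : Fin n → ℕ}
    (hb : ∀ i, i ∉ Set.range g → b i = 0) :
    posList (List.ofFn (b ∘ g)) = posList (List.ofFn b) := by
  rw [posList, posList, ← List.map_ofFn, List.ofFn_eq_map (f := b), List.filter_map,
    List.filter_map]
  congr 1
  have hsorted : ((List.ofFn g).filter ((decide <| · ≠ 0) ∘ b)).Pairwise (· < ·) :=
    (List.pairwise_ofFn.2 fun _ _ h => hg h).filter _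
  have hsorted' : ((List.finRange n).filter ((decide <| · ≠ 0) ∘ b)).Pairwise (· < ·) :=
    (List.pairwise_lt_finRange n).filter _
  refine List.Perm.eq_of_pairwise' hsorted hsorted' ?_
  rw [List.perm_ext_iff_of_nodup hsorted.nodup hsorted'.nodup]
  intro i
  simp only [List.mem_filter, List.mem_ofFn, List.mem_finRange, true_and, comp_apply,
    decide_eq_true_eq]
  exact ⟨And.right, fun hi => ⟨by_contra fun hr => hi (hb i hr), hi⟩⟩

theorem posList_ofFn_extend (hg : StrictMono g) (w : Fin m → ℕ) :
    posList (List.ofFn (extend g w 0)) = posList (List.ofFn w) := by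
  rw [← posList_ofFn_comp hg fun i hi => extend_apply' (f := g) w 0 i hi,
    extend_comp hg.injective]

theorem extend_mem_Pset_iff (hg : StrictMono g) (α : List ℕ) (w : Fin m → ℕ) :
    extend g w 0 ∈ Pset α n ↔ w ∈ Pset α m := by
  constructor
  · rintro ⟨T, hT, hTS, hw⟩
    have hle : ∀ b ∈ T, b ≤ extend g w 0 := fun b hb => hw ▸ le_sup (f := id) hb
    refine ⟨T.image (· ∘ g), hT.image _, ?_, ?_⟩
    · simp only [coe_image, Set.image_subset_iff]
      intro b hb
      change posList _ = α
      rw [posList_ofFn_comp hg fun i => apply_eq_zero_of_le_extend b w (hle b hb)]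
      exact hTS hb
    · funext s
      rw [sup_image, Finset.sup_apply, ← extend_comp hg.injective w 0, comp_apply, hw,
        Finset.sup_apply]
      rfl
  · rintro ⟨T, hT, hTS, rfl⟩
    refine ⟨T.image fun v => extend g v 0, hT.image _, ?_,
      by rw [sup_image, extend_finset_sup hg.injective]; rfl⟩
    simp only [coe_image, Set.image_subset_iff]
    intro b hb
    change posList _ = α
    rw [posList_ofFn_extend hg]
    exact hTS hb

end PositivePart

theorem expVec_eq_extend {n k : ℕ} {j : Fin k → Fin n} (hj : Injective j) (β : Fin k → ℕ) :
    expVec j β = Finsupp.equivFunOnFinite.symm (extend j β 0) := by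
  rw [expVec]
  congr 1
  funext i
  by_cases hi : i ∈ Set.range j
  · obtain ⟨s, rfl⟩ := hi
    simp [hj.eq_iff, hj.extend_apply]
  · rw [extend_apply' _ _ _ hi]
    exact sum_eq_zero fun t _ => if_neg fun h => hi ⟨t, h⟩

theorem coeff_sum_smul_prod_X_pow {σ R : Type*} [Fintype σ] [CommSemiring R]
    (F : Finset (σ → ℕ)) (c : (σ → ℕ) → R) (e : σ → ℕ) :
    coeff (Finsupp.equivFunOnFinite.symm e)
        (∑ τ ∈ F, c τ • ∏ i, (X i : MvPolynomial σ R) ^ τ i) =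
      if e ∈ F then c e else 0 := by
  have hmonomial : ∀ τ : σ → ℕ, ∏ i, (X i : MvPolynomial σ R) ^ τ i =
      monomial (Finsupp.equivFunOnFinite.symm τ) 1 := fun τ => by
    rw [monomial_eq, C_1, one_mul, Finsupp.prod_fintype _ _ (by simp)]
    rfl
  simp only [hmonomial, coeff_sum, coeff_smul, coeff_monomial,
    Finsupp.equivFunOnFinite.symm.injective.eq_iff, smul_eq_mul, mul_ite, mul_one, mul_zero]
  exact sum_ite_eq' F e c

section Pset

variable {α : List ℕ} {m n : ℕ} {F : Finset (Fin n → ℕ)} {g : Fin m → Fin n}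

theorem extend_mem_iff_mem_Pset (hF : (↑F : Set (Fin n → ℕ)) = Pset α n) (hg : StrictMono g)
    (v : Fin m → ℕ) :
    extend g v 0 ∈ F ↔ v ∈ Pset α m := by
  rw [← mem_coe, hF, extend_mem_Pset_iff hg]

theorem sum_Iic_filter_Pset_extend (hF : (↑F : Set (Fin n → ℕ)) = Pset α n)
    {μ : (Fin n → ℕ) → ℤ} (hμ : ∀ p ∈ F, ∑ q ∈ F.filter (fun q => q ≤ p), μ q = 1)
    (hg : StrictMono g) {w : Fin m → ℕ} (hw : w ∈ Pset α m) :
    ∑ v ∈ Iic w with v ∈ Pset α m, μ (extend g v 0) = 1 := by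
  rw [← hμ _ ((extend_mem_iff_mem_Pset hF hg w).2 hw), sum_filter_le_extend hg.injective]
  refine sum_congr ?_ fun _ _ => rfl
  ext v
  simp only [mem_filter, extend_mem_iff_mem_Pset hF hg]

end Pset

theorem stmt_9_general (α : List ℕ) (n : ℕ)
    (F : Finset (Fin n → ℕ)) (hF : (↑F : Set (Fin n → ℕ)) = Pset α n)
    (μ : (Fin n → ℕ) → ℤ)
    (hμ : ∀ p ∈ F, ∑ q ∈ F.filter (fun q => q ≤ p), μ q = 1) :
    IsQuasisymmetric (∑ σ ∈ F, μ σ • ∏ i : Fin n, (X i : MvPolynomial (Fin n) ℤ) ^ σ i) := by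
  intro k β _ j j' hj hj'
  rw [expVec_eq_extend hj.injective, expVec_eq_extend hj'.injective, coeff_sum_smul_prod_X_pow,
    coeff_sum_smul_prod_X_pow]
  by_cases hβ : β ∈ Pset α k
  · rw [if_pos ((extend_mem_iff_mem_Pset hF hj β).2 hβ),
      if_pos ((extend_mem_iff_mem_Pset hF hj' β).2 hβ)]
    refine eq_of_sum_Iic_filter_eq (ν₁ := fun v => μ (extend j v 0))
      (ν₂ := fun v => μ (extend j' v 0)) (fun w hw => ?_) β hβ
    rw [sum_Iic_filter_Pset_extend hF hμ hj hw, sum_Iic_filter_Pset_extend hF hμ hj' hw]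
  · rw [if_neg (mt (extend_mem_iff_mem_Pset hF hj β).1 hβ),
      if_neg (mt (extend_mem_iff_mem_Pset hF hj' β).1 hβ)]

/-- The polynomial `M̄_α(y_1,…,y_n) = ∑_{σ ∈ P_α} μ_{P_α}(σ) y^σ` is quasisymmetric,
where `μ_{P_α}` is determined by `∑_{q ≤ p} μ_{P_α}(q) = 1` for all `p ∈ P_α`. -/
theorem stmt_9 (α : List ℕ) (hα : ∀ a ∈ α, 0 < a) (n : ℕ) (hn : α.length ≤ n)
    (F : Finset (Fin n → ℕ)) (hF : (↑F : Set (Fin n → ℕ)) = Pset α n)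
    (μ : (Fin n → ℕ) → ℤ)
    (hμ : ∀ p ∈ F, ∑ q ∈ F.filter (fun q => q ≤ p), μ q = 1) :
    IsQuasisymmetric (∑ σ ∈ F, μ σ • ∏ i : Fin n, (X i : MvPolynomial (Fin n) ℤ) ^ σ i) :=
  stmt_9_general α n F hF μ hμ
end

section
/- If f(y_1,...,y_n) is a quasisymmetric polynomial and g(x) is a formal power series in one variable with zero constant term, then f(g(x_1), g(x_2), ..., g(x_n)) is a quasisymmetric power series in x_1,...,x_n. -/
/-!
Substituting `g(x_i)` for `y_i` sends the monomial `y^d` to `∏ᵢ g(x_i)^{d_i}`, whose coefficient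
at `x^e` is `∏ᵢ [x^{e_i}] g^{d_i}`. As `g` has no constant term, this vanishes unless `d` and `e`
have the same support. Hence the coefficient of `x_{j_1}^{β_1}⋯x_{j_k}^{β_k}` is
`∑_α [y_{j_1}^{α_1}⋯y_{j_k}^{α_k}] f · ∏_t [x^{β_t}] g^{α_t}`, where only `α` with positive
entries contribute, and for those quasisymmetry of `f` removes the dependence on `j`.
-/

open MvPolynomial Finset
open scoped Classical

/-- Quasisymmetry for multivariate power series. -/
def IsQuasisymmetricPS {n : ℕ} {R : Type*} [CommSemiring R]
    (f : MvPowerSeries (Fin n) R) : Prop :=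
  ∀ (k : ℕ) (β : Fin k → ℕ), (∀ t, 0 < β t) →
    ∀ j j' : Fin k → Fin n, StrictMono j → StrictMono j' →
      MvPowerSeries.coeff (expVec j β) f = MvPowerSeries.coeff (expVec j' β) f

/-- The power series `g(x_i)`, where `g` has coefficients `c : ℕ → R`, viewed in
`R⟦x_1,…,x_n⟧`: its coefficient at a monomial supported on `{i}` with exponent `m`
is `c m`, and it vanishes on all other monomials. -/
noncomputable def singleVarPS {n : ℕ} {R : Type*} [CommSemiring R] (c : ℕ → R) (i : Fin n) :
    MvPowerSeries (Fin n) R :=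
  fun d => if d = Finsupp.single i (d i) then c (d i) else 0

namespace MvPowerSeries

variable {σ R : Type*} [CommSemiring R]

lemma coeff_rename_const (i : σ) (H : PowerSeries R) (x : σ →₀ ℕ) :
    coeff x (rename (fun _ : Unit => i) H)
      = if x = Finsupp.single i (x i) then PowerSeries.coeff (x i) H else 0 := by
  split_ifs with hx
  · obtain ⟨m, rfl⟩ : ∃ m, x = Finsupp.single i m := ⟨_, hx⟩
    rw [Finsupp.single_eq_same]
    have := coeff_embDomain_rename (Function.Embedding.punit i) H (Finsupp.single () m)
    rwa [Finsupp.embDomain_single] at this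
  · refine coeff_rename_eq_zero _ _ ?_
    rintro ⟨y, rfl⟩
    apply hx
    obtain ⟨m, rfl⟩ : ∃ m, y = Finsupp.single () m := ⟨_, Finsupp.unique_single y⟩
    simp [Finsupp.mapDomain_single]

lemma coeff_prod_rename_const [Fintype σ] (H : σ → PowerSeries R) (e : σ →₀ ℕ) :
    coeff e (∏ i, rename (fun _ : Unit => i) (H i)) = ∏ i, PowerSeries.coeff (e i) (H i) := by
  set l₀ : σ →₀ σ →₀ ℕ := Finsupp.equivFunOnFinite.symm fun i => Finsupp.single i (e i)
  have hl₀ : l₀ ∈ finsuppAntidiag univ e := by simp [l₀]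
  rw [coeff_prod, Finset.sum_eq_single_of_mem l₀ hl₀]
  · refine Finset.prod_congr rfl fun i _ => ?_
    simp [l₀, coeff_rename_const]
  · intro l hl hne
    by_contra hprod
    have hsingle (i : σ) : l i = Finsupp.single i (l i i) := by
      by_contra h
      exact hprod (Finset.prod_eq_zero (mem_univ i) (by rw [coeff_rename_const, if_neg h]))
    have hdiag (i : σ) : l i i = e i := calc
      l i i = ∑ k, l k i := by
        refine (Finset.sum_eq_single (f := fun k => l k i) i (fun k _ hk => ?_)
          (absurd (mem_univ i))).symm
        rw [hsingle k, Finsupp.single_apply, if_neg hk]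
      _ = e i := by rw [← Finsupp.finsetSum_apply, (mem_finsuppAntidiag.mp hl).1]
    refine hne (Finsupp.ext fun i => ?_)
    rw [hsingle i, hdiag i]
    rfl

end MvPowerSeries

lemma PowerSeries.eq_zero_iff_of_coeff_pow_ne_zero {R : Type*} [Semiring R] {G : PowerSeries R}
    (hG : constantCoeff G = 0) {m a : ℕ} (h : coeff m (G ^ a) ≠ 0) : m = 0 ↔ a = 0 := by
  rcases Nat.eq_zero_or_pos a with rfl | ha
  · simp_all [coeff_one]
  · refine iff_of_false (fun hm => h ?_) ha.ne'
    simp [hm, hG, ha.ne']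

section expVec

variable {n k : ℕ} {j : Fin k → Fin n}

lemma expVec_apply_of_injective (hj : Function.Injective j) (β : Fin k → ℕ) (t : Fin k) :
    expVec j β (j t) = β t := by
  simp [expVec, Finset.sum_ite_eq', hj.eq_iff]

lemma expVec_apply_of_notMem_range {i : Fin n} (hi : i ∉ Set.range j) (β : Fin k → ℕ) :
    expVec j β i = 0 := by
  simpa [expVec] using fun t h => absurd ⟨t, h⟩ hi

lemma expVec_injective (hj : Function.Injective j) : Function.Injective (expVec j) :=
  fun α α' h => funext fun t => by
    rw [← expVec_apply_of_injective hj α, h, expVec_apply_of_injective hj]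

lemma expVec_comp_of_support_subset (hj : Function.Injective j) {d : Fin n →₀ ℕ}
    (hd : ↑d.support ⊆ Set.range j) : expVec j (fun t => d (j t)) = d := by
  ext i
  by_cases hi : i ∈ Set.range j
  · obtain ⟨t, rfl⟩ := hi
    exact expVec_apply_of_injective hj _ t
  · rw [expVec_apply_of_notMem_range hi, eq_comm, ← Finsupp.notMem_support_iff]
    exact fun h => hi (hd h)

lemma prod_expVec_expVec {M : Type*} [CommMonoid M] (hj : Function.Injective j)
    {u : ℕ → ℕ → M} (hu : u 0 0 = 1) (β α : Fin k → ℕ) :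
    ∏ i, u (expVec j β i) (expVec j α i) = ∏ t, u (β t) (α t) := by
  rw [← Finset.prod_subset (subset_univ (univ.image j)), Finset.prod_image hj.injOn]
  · simp only [expVec_apply_of_injective hj]
  · intro i _ hi
    have hi' : i ∉ Set.range j := by simpa using hi
    rw [expVec_apply_of_notMem_range hi', expVec_apply_of_notMem_range hi', hu]

end expVec

lemma singleVarPS_eq_rename {n : ℕ} {R : Type*} [CommSemiring R] (c : ℕ → R) (i : Fin n) :
    singleVarPS c i = MvPowerSeries.rename (fun _ : Unit => i) (PowerSeries.mk c) := by
  ext x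
  rw [MvPowerSeries.coeff_rename_const, PowerSeries.coeff_mk, MvPowerSeries.coeff_apply,
    singleVarPS]
  congr

lemma coeff_aeval_singleVarPS {n : ℕ} {R : Type*} [CommSemiring R] (f : MvPolynomial (Fin n) R)
    (c : ℕ → R) (e : Fin n →₀ ℕ) :
    MvPowerSeries.coeff e (aeval (fun i => singleVarPS c i) f)
      = ∑ d ∈ f.support, f.coeff d * ∏ i, PowerSeries.coeff (e i) (PowerSeries.mk c ^ d i) := by
  rw [aeval_def, eval₂_eq', map_sum]
  refine Finset.sum_congr rfl fun d _ => ?_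
  simp_rw [singleVarPS_eq_rename, ← map_pow]
  rw [MvPowerSeries.algebraMap_apply, Algebra.algebraMap_self, RingHom.id_apply,
    MvPowerSeries.coeff_C_mul, MvPowerSeries.coeff_prod_rename_const]

lemma coeff_expVec_aeval_singleVarPS {n k : ℕ} {R : Type*} [CommSemiring R]
    (f : MvPolynomial (Fin n) R) {c : ℕ → R} (hc : c 0 = 0) (β : Fin k → ℕ)
    {j : Fin k → Fin n} (hj : Function.Injective j) :
    MvPowerSeries.coeff (expVec j β) (aeval (fun i => singleVarPS c i) f)
      = ∑ᶠ α : Fin k → ℕ,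
          f.coeff (expVec j α) * ∏ t, PowerSeries.coeff (β t) (PowerSeries.mk c ^ α t) := by
  set G := PowerSeries.mk c
  have hG : PowerSeries.constantCoeff G = 0 := by simpa [G] using hc
  set h : (Fin n →₀ ℕ) → R :=
    fun d => f.coeff d * ∏ i, PowerSeries.coeff (expVec j β i) (G ^ d i)
  -- Since `G` has no constant term, `d` vanishes wherever `expVec j β` does.
  have hsupp : Function.support h ⊆ Set.range (expVec j) := by
    intro d hd
    have hfactor (i : Fin n) : PowerSeries.coeff (expVec j β i) (G ^ d i) ≠ 0 :=
      fun h0 => right_ne_zero_of_mul hd (Finset.prod_eq_zero (mem_univ i) h0)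
    refine ⟨fun t => d (j t), expVec_comp_of_support_subset hj fun i hi => ?_⟩
    by_contra hi'
    exact Finsupp.mem_support_iff.mp hi <|
      (PowerSeries.eq_zero_iff_of_coeff_pow_ne_zero hG (hfactor i)).mp
        (expVec_apply_of_notMem_range hi' β)
  calc MvPowerSeries.coeff (expVec j β) (aeval (fun i => singleVarPS c i) f)
      = ∑ᶠ d, h d := by
        rw [coeff_aeval_singleVarPS, finsum_eq_sum_of_support_subset h]
        exact fun d hd => Finsupp.mem_support_iff.mpr (left_ne_zero_of_mul hd)
    _ = ∑ᶠ α, h (expVec j α) := by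
        rw [← finsum_mem_range (expVec_injective hj), finsum_mem_def,
          Set.indicator_eq_self.mpr hsupp]
    _ = _ := finsum_congr fun α => by
        simp only [h]
        rw [prod_expVec_expVec hj (u := fun m a => PowerSeries.coeff m (G ^ a)) (by simp)]

/-- If `f` is a quasisymmetric polynomial and `g` is a one-variable power series with
zero constant term, then `f(g(x_1), …, g(x_n))` is a quasisymmetric power series. -/
theorem stmt_11 {n : ℕ} {R : Type*} [CommRing R]
    (f : MvPolynomial (Fin n) R) (hf : IsQuasisymmetric f)
    (c : ℕ → R) (hc : c 0 = 0) :
    IsQuasisymmetricPS (MvPolynomial.aeval (fun i : Fin n => singleVarPS c i) f) := by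
  intro k β hβ j j' hj hj'
  rw [coeff_expVec_aeval_singleVarPS f hc β hj.injective,
    coeff_expVec_aeval_singleVarPS f hc β hj'.injective]
  refine finsum_congr fun α => ?_
  by_cases hα : ∀ t, 0 < α t
  · rw [hf k α hα j j' hj hj']
  · obtain ⟨t, ht⟩ := not_forall.mp hα
    have hzero : PowerSeries.coeff (β t) (PowerSeries.mk c ^ α t) = 0 := by
      simp [Nat.eq_zero_of_not_pos ht, PowerSeries.coeff_one, (hβ t).ne']
    rw [Finset.prod_eq_zero (mem_univ t) hzero, mul_zero, mul_zero]
end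

section
/- For compositions α of length m and β of length n, the product of monomial quasisymmetric functions satisfies M_α · M_β = ∑_γ c_{α,β}^γ M_γ, where c_{α,β}^γ is the number of overlapping shuffles τ of (m,n) with γ^τ = γ. -/
/-!
Expanding the product, `M_α M_β = ∑ x^w` over `f = u ⧺ v : [m+n] → [N]` with `u`, `v` strictly
increasing, where `w = α ⧺ β` and `x^w = ∏ⱼ x_{f j}^{w j}`. Every `f` factors uniquely as
`f = i ∘ τ` with `τ : [m+n] ↠ [k]` and `i : [k] → [N]` strictly increasing (`i` enumerates the
image of `f`), and since `i` is strictly increasing, `f` is increasing on both blocks iff `τ` is,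
i.e. iff `τ` is an overlapping shuffle. For fixed `τ` the sum over `i` of `x^w` is `M_{γ^τ}`;
grouping the shuffles `τ` by `γ^τ` produces the coefficients `c_{α,β}^γ`.
-/

open MvPolynomial Finset
open scoped Classical

/-- An overlapping shuffle of `(m,n)`: a surjection `τ : [m+n] → [k]` that is
strictly increasing on the first `m` elements and on the last `n` elements. -/
def IsOverlappingShuffle (m n : ℕ) {k : ℕ} (τ : Fin (m + n) → Fin k) : Prop :=
  Function.Surjective τ ∧
    (∀ i j : Fin (m + n), (i : ℕ) < (j : ℕ) → (j : ℕ) < m → τ i < τ j) ∧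
    (∀ i j : Fin (m + n), m ≤ (i : ℕ) → (i : ℕ) < (j : ℕ) → τ i < τ j)

/-- The composition `γ^τ` with `γ^τ_i = ∑_{τ(j)=i} (α⌢β)_j`. -/
def gammaComp (α β : List ℕ) {k : ℕ} (τ : Fin (α.length + β.length) → Fin k) : List ℕ :=
  List.ofFn (fun i : Fin k =>
    ∑ j : Fin (α.length + β.length), if τ j = i then (α ++ β).getD (j : ℕ) 0 else 0)

/-- `c_{α,β}^γ`: the number of overlapping shuffles `τ` of `(ℓ(α), ℓ(β))` with
`γ^τ = γ`. -/
noncomputable def shuffleCoeff (α β γ : List ℕ) : ℕ :=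
  Nat.card {τ : Fin (α.length + β.length) → Fin γ.length //
    IsOverlappingShuffle α.length β.length τ ∧ gammaComp α β τ = γ}

/-- The truncated monomial quasisymmetric function
`M_{N,α} = ∑_{i_1 < ⋯ < i_k ≤ N} x_{i_1}^{α_1} ⋯ x_{i_k}^{α_k}`. -/
noncomputable def Mqs (N : ℕ) (α : List ℕ) : MvPolynomial (Fin N) ℤ :=
  ∑ j ∈ Finset.univ.filter (fun j : Fin α.length → Fin N => StrictMono j),
    ∏ t : Fin α.length, X (j t) ^ α.get t

section BlockStrictMono

variable {α β : Type*} {m n : ℕ}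

def IsBlockStrictMono [Preorder α] (m n : ℕ) (f : Fin (m + n) → α) : Prop :=
  (∀ i j : Fin (m + n), (i : ℕ) < j → (j : ℕ) < m → f i < f j) ∧
    (∀ i j : Fin (m + n), m ≤ (i : ℕ) → (i : ℕ) < j → f i < f j)

lemma isOverlappingShuffle_iff {k : ℕ} (τ : Fin (m + n) → Fin k) :
    IsOverlappingShuffle m n τ ↔ Function.Surjective τ ∧ IsBlockStrictMono m n τ :=
  Iff.rfl

lemma StrictMono.isBlockStrictMono_comp_iff [LinearOrder α] [Preorder β] {i : α → β}
    (hi : StrictMono i) {f : Fin (m + n) → α} :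
    IsBlockStrictMono m n (i ∘ f) ↔ IsBlockStrictMono m n f := by
  simp only [IsBlockStrictMono, Function.comp_apply, hi.lt_iff_lt]

lemma isBlockStrictMono_append_iff [Preorder α] {u : Fin m → α} {v : Fin n → α} :
    IsBlockStrictMono m n (Fin.append u v) ↔ StrictMono u ∧ StrictMono v := by
  constructor
  · rintro ⟨hu, hv⟩
    refine ⟨fun a b hab => ?_, fun a b hab => ?_⟩
    · simpa using hu (Fin.castAdd n a) (Fin.castAdd n b) hab b.isLt
    · simpa using hv (Fin.natAdd m a) (Fin.natAdd m b) (by simp) (by simpa using hab)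
  · rintro ⟨hu, hv⟩
    constructor <;> intro i j <;>
      induction i using Fin.addCases <;> induction j using Fin.addCases <;>
      simp [← Fin.val_fin_lt, hu.lt_iff_lt, hv.lt_iff_lt] <;> omega

end BlockStrictMono

section ImageFactorization

variable {α : Type*} [LinearOrder α] {M k : ℕ}

lemma card_image_comp_of_surjective {τ : Fin M → Fin k} (hτ : Function.Surjective τ)
    {i : Fin k → α} (hi : StrictMono i) : #(univ.image (i ∘ τ)) = k := by
  rw [← image_image, image_univ_of_surjective hτ, card_image_of_injective _ hi.injective,
    card_fin]

lemma eq_and_eq_of_comp_eq_comp {τ τ' : Fin M → Fin k} (hτ : Function.Surjective τ)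
    (hτ' : Function.Surjective τ') {i i' : Fin k → α} (hi : StrictMono i) (hi' : StrictMono i')
    (h : i ∘ τ = i' ∘ τ') : τ = τ' ∧ i = i' := by
  have hii' : i = i' := by
    rw [← hi.range_inj hi', ← hτ.range_comp, ← hτ'.range_comp, h]
  subst hii'
  exact ⟨hi.injective.comp_left h, rfl⟩

lemma exists_surjective_strictMono_comp_eq (f : Fin M → α) (hf : #(univ.image f) = k) :
    ∃ τ : Fin M → Fin k, Function.Surjective τ ∧ ∃ i : Fin k → α, StrictMono i ∧ i ∘ τ = f := by
  set e := (univ.image f).orderIsoOfFin hf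
  have hfe (j : Fin M) : f j ∈ univ.image f := mem_image_of_mem f (mem_univ j)
  refine ⟨fun j => e.symm ⟨f j, hfe j⟩, fun r => ?_, fun r => e r,
    fun a b hab => e.strictMono hab, funext fun j => by simp⟩
  obtain ⟨j, -, hj⟩ := mem_image.1 (e r).2
  exact ⟨j, by simp [hj]⟩

lemma sum_eq_sum_surjective_strictMono [Fintype α] {R : Type*} [AddCommMonoid R]
    (F : (Fin M → α) → R) :
    ∑ f, F f = ∑ k ∈ range (M + 1), ∑ τ : Fin M → Fin k with Function.Surjective τ,
      ∑ i : Fin k → α with StrictMono i, F (i ∘ τ) := by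
  rw [← sum_fiberwise_of_maps_to (g := fun f => #(univ.image f)) (t := range (M + 1))
    fun f _ => mem_range_succ_iff.2 (card_image_le.trans (by simp))]
  refine sum_congr rfl fun k _ => ?_
  rw [← sum_product']
  symm
  refine sum_nbij (fun p => p.2 ∘ p.1) (fun p hp => ?_) (fun p hp q hq hpq => ?_) ?_ fun _ _ => rfl
  · simp only [mem_product, mem_filter, mem_univ, true_and] at hp ⊢
    exact card_image_comp_of_surjective hp.1 hp.2
  · simp only [coe_product, coe_filter, mem_univ, true_and, Set.mem_prod,
      Set.mem_ofPred_eq] at hp hq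
    obtain ⟨h1, h2⟩ := eq_and_eq_of_comp_eq_comp hp.1 hq.1 hp.2 hq.2 hpq
    exact Prod.ext h1 h2
  · intro f hf
    simp only [coe_filter, mem_univ, true_and, Set.mem_ofPred_eq] at hf
    obtain ⟨τ, hτ, i, hi, rfl⟩ := exists_surjective_strictMono_comp_eq f hf
    exact ⟨(τ, i), by simp [hτ, hi], rfl⟩

end ImageFactorization

lemma sum_isBlockStrictMono_eq {α R : Type*} [LinearOrder α] [Fintype α] [AddCommMonoid R]
    {m n : ℕ} (F : (Fin (m + n) → α) → R) :
    ∑ f ∈ univ.filter (IsBlockStrictMono m n), F f =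
      ∑ k ∈ range (m + n + 1), ∑ τ : Fin (m + n) → Fin k with IsOverlappingShuffle m n τ,
        ∑ i : Fin k → α with StrictMono i, F (i ∘ τ) := by
  rw [sum_filter, sum_eq_sum_surjective_strictMono]
  refine sum_congr rfl fun k _ => ?_
  simp only [isOverlappingShuffle_iff, ← filter_filter, sum_filter (p := IsBlockStrictMono m n)]
  refine sum_congr rfl fun τ _ => ?_
  rw [sum_congr rfl fun i hi => if_congr (mem_filter.1 hi).2.isBlockStrictMono_comp_iff rfl rfl,
    sum_ite_irrel, sum_const_zero]

lemma IsOverlappingShuffle.le_add {m n k : ℕ} {τ : Fin (m + n) → Fin k}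
    (h : IsOverlappingShuffle m n τ) : k ≤ m + n := by
  simpa using Fintype.card_le_of_surjective τ h.1

noncomputable def overlappingShuffles (m n : ℕ) : Finset (Σ k : ℕ, Fin (m + n) → Fin k) :=
  (range (m + n + 1)).sigma fun _ => univ.filter (IsOverlappingShuffle m n)

lemma mem_overlappingShuffles {m n : ℕ} {q : Σ k : ℕ, Fin (m + n) → Fin k} :
    q ∈ overlappingShuffles m n ↔ IsOverlappingShuffle m n q.2 := by
  simpa [overlappingShuffles, Nat.lt_succ_iff] using IsOverlappingShuffle.le_add

lemma length_gammaComp (α β : List ℕ) {k : ℕ} (τ : Fin (α.length + β.length) → Fin k) :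
    (gammaComp α β τ).length = k := by
  simp [gammaComp]

lemma shuffleCoeff_eq_card_filter (α β γ : List ℕ) :
    shuffleCoeff α β γ =
      #{q ∈ overlappingShuffles α.length β.length | gammaComp α β q.2 = γ} := by
  rw [shuffleCoeff, Nat.card_eq_fintype_card, Fintype.card_subtype]
  refine card_bij (fun τ _ => ⟨γ.length, τ⟩) (fun τ hτ => ?_) (fun τ _ τ' _ h => ?_) ?_
  · simpa [mem_overlappingShuffles] using hτ
  · exact eq_of_heq (Sigma.mk.inj h).2
  · rintro ⟨k, τ⟩ hτ
    simp only [mem_filter, mem_overlappingShuffles] at hτ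
    obtain rfl : γ.length = k := hτ.2 ▸ length_gammaComp α β τ
    exact ⟨τ, by simpa using hτ, rfl⟩

lemma finsum_shuffleCoeff_smul {R : Type*} [AddCommGroup R] (α β : List ℕ) (F : List ℕ → R) :
    ∑ᶠ γ, (shuffleCoeff α β γ : ℤ) • F γ =
      ∑ q ∈ overlappingShuffles α.length β.length, F (gammaComp α β q.2) := by
  simp_rw [shuffleCoeff_eq_card_filter, natCast_zsmul]
  rw [sum_comp, finsum_eq_sum_of_support_subset]
  intro γ hγ
  obtain ⟨q, hq⟩ := card_ne_zero.1 (left_ne_zero_of_smul hγ)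
  exact mem_image.2 ⟨q, mem_filter.1 hq⟩

lemma Finset.prod_pow_sum_fiber {ι κ R : Type*} [Fintype ι] [Fintype κ] [DecidableEq κ]
    [CommMonoid R] (g : κ → R) (τ : ι → κ) (w : ι → ℕ) :
    ∏ r, g r ^ (∑ j, if τ j = r then w j else 0) = ∏ j, g (τ j) ^ w j := by
  simp_rw [← sum_filter, ← prod_pow_eq_pow_sum]
  rw [← prod_fiberwise univ τ]
  exact prod_congr rfl fun r _ => prod_congr rfl fun j hj => by rw [(mem_filter.1 hj).2]

lemma Mqs_ofFn (N : ℕ) {k : ℕ} (e : Fin k → ℕ) :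
    Mqs N (List.ofFn e) = ∑ i : Fin k → Fin N with StrictMono i, ∏ r, X (i r) ^ e r := by
  have hk : (List.ofFn e).length = k := List.length_ofFn
  refine sum_equiv ((finCongr hk).arrowCongr (Equiv.refl _)) (fun i => ?_) (fun i _ => ?_)
  · simp only [mem_filter, mem_univ, true_and]
    exact ⟨fun h a b hab => h hab,
      fun h a b hab => by simpa using h (a := Fin.cast hk a) (b := Fin.cast hk b) hab⟩
  · exact Fintype.prod_equiv (finCongr hk) _ _ fun t => by simp [Fin.cast]

lemma Mqs_gammaComp (N : ℕ) (α β : List ℕ) {k : ℕ} (τ : Fin (α.length + β.length) → Fin k) :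
    Mqs N (gammaComp α β τ) =
      ∑ i : Fin k → Fin N with StrictMono i, ∏ j, X (i (τ j)) ^ (α ++ β).getD j 0 := by
  simp only [gammaComp, Mqs_ofFn, prod_pow_sum_fiber]

lemma Mqs_mul_Mqs (N : ℕ) (α β : List ℕ) :
    Mqs N α * Mqs N β = ∑ f ∈ univ.filter (IsBlockStrictMono α.length β.length),
      ∏ j, X (f j) ^ (α ++ β).getD j 0 := by
  simp only [Mqs, sum_mul_sum, ← sum_product', ← filter_product]
  refine sum_equiv (Fin.appendEquiv _ _) (fun p => ?_) (fun p _ => ?_)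
  · simp only [mem_product, mem_filter, mem_univ, true_and]
    exact isBlockStrictMono_append_iff.symm
  · simp [Fin.prod_univ_add]

theorem stmt_13_general (α β : List ℕ) (N : ℕ) :
    Mqs N α * Mqs N β = ∑ᶠ γ : List ℕ, (shuffleCoeff α β γ : ℤ) • Mqs N γ := by
  rw [finsum_shuffleCoeff_smul, Mqs_mul_Mqs, sum_isBlockStrictMono_eq, overlappingShuffles,
    sum_sigma]
  simp only [Mqs_gammaComp, Function.comp_apply]

/-- Hazewinkel's rule: `M_α · M_β = ∑_γ c_{α,β}^γ M_γ`, where `c_{α,β}^γ` counts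
overlapping shuffles of `(ℓ(α), ℓ(β))` producing `γ`. -/
theorem stmt_13 (α β : List ℕ) (hα : ∀ a ∈ α, 0 < a) (hβ : ∀ a ∈ β, 0 < a) (N : ℕ) :
    Mqs N α * Mqs N β = ∑ᶠ γ : List ℕ, (shuffleCoeff α β γ : ℤ) • Mqs N γ :=
  stmt_13_general α β N
end
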